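/- In the Schelling model on a finite simple graph, let i ≠ j be two vertices (adjacent or not) and let y be the coloring obtained from x by exchanging the values x_i and x_j. Then L(y) − L(x) = 2·[(u_i(y) + u_j(y)) − (u_i(x) + u_j(x))]: the change in potential under a swap equals twice the change in the summed utilities of the two swapped agents. -/

import Mathlib

/-! Write `w_u(x) = ∑_{v ~ u} a_x(u, v)`, where `a_x(u, v) = ±1` according as `u` and `v` agree, so
that `∑_u w_u(x)` counts every edge twice. Swapping the colors of `i` and `j` leaves `a(u, v)`
unchanged unless exactly one of `u, v` lies in `{i, j}`; each such edge is counted once in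
`w_i + w_j` and twice in `∑_u w_u`, and the noise terms `ε_u` cancel. -/

open Classical Filter Finset

noncomputable section

namespace Schelling

variable {V : Type*} [Fintype V] [DecidableEq V]

/-- A coloring assigns `+1` or `-1` to each vertex. -/
def IsColoring (x : V → ℤ) : Prop := ∀ v, x v = 1 ∨ x v = -1

/-- `wdeg G x i` : number of neighbors of `i` with the same color minus
the number of neighbors with the opposite color. -/
def wdeg (G : SimpleGraph V) (x : V → ℤ) (i : V) : ℤ :=
  ((univ.filter fun j => G.Adj i j ∧ x j = x i).card : ℤ)
    - ((univ.filter fun j => G.Adj i j ∧ x j ≠ x i).card : ℤ)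

/-- Utility of agent `i`. -/
def util (G : SimpleGraph V) (r : ℝ) (εc : V → ℝ) (x : V → ℤ) (i : V) : ℝ :=
  r * (wdeg G x i : ℝ) + εc i

/-- The potential `L`. -/
def potential (G : SimpleGraph V) (r : ℝ) (εc : V → ℝ) (x : V → ℤ) : ℝ :=
  ∑ i, util G r εc x i

/-- Number of bichromatic edges. -/
def bichromCount (G : SimpleGraph V) (x : V → ℤ) : ℕ :=
  (G.edgeFinset.filter fun e =>
    Sym2.lift ⟨fun u v => x u ≠ x v, fun u v => by simp [ne_comm]⟩ e).card

/-- Number of monochromatic edges. -/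
def monoCount (G : SimpleGraph V) (x : V → ℤ) : ℕ :=
  (G.edgeFinset.filter fun e =>
    Sym2.lift ⟨fun u v => x u = x v, fun u v => by simp [eq_comm]⟩ e).card

/-- Number of vertices colored `+1`. -/
def plusCount (x : V → ℤ) : ℕ := (univ.filter fun v => x v = 1).card

/-- A coloring is maximally segregated if it minimizes the number of bichromatic
edges among all colorings with the same number of `+1` vertices. -/
def MaximallySegregated (G : SimpleGraph V) (x : V → ℤ) : Prop :=
  ∀ x' : V → ℤ, IsColoring x' → plusCount x' = plusCount x →
    bichromCount G x ≤ bichromCount G x'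

/-- Exchange the values of a coloring at `i` and `j`. -/
def swap (x : V → ℤ) (i j : V) : V → ℤ :=
  fun v => if v = i then x j else if v = j then x i else x v

/-- The resistance of activating pair `e' = (i,j)` in state `x` with outcome `x'`. -/
def resist (G : SimpleGraph V) (r : ℝ) (εc : V → ℝ)
    (x : V → ℤ) (e' : V × V) (x' : V → ℤ) : ℝ :=
  let y := swap x e'.1 e'.2
  let a := util G r εc x e'.1 + util G r εc x e'.2
  let b := util G r εc y e'.1 + util G r εc y e'.2
  if x' = x then max 0 (b - a) else max 0 (a - b)

/-- The `N × N` torus. -/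
def torus (N : ℕ) : SimpleGraph (ZMod N × ZMod N) where
  Adj u v := u ≠ v ∧
    ((u.1 = v.1 ∧ (u.2 = v.2 + 1 ∨ v.2 = u.2 + 1)) ∨
     (u.2 = v.2 ∧ (u.1 = v.1 + 1 ∨ v.1 = u.1 + 1)))
  symm := by
    constructor
    rintro u v ⟨hne, h⟩
    refine ⟨hne.symm, ?_⟩
    rcases h with ⟨h1, h2⟩ | ⟨h1, h2⟩
    · exact Or.inl ⟨h1.symm, h2.symm⟩
    · exact Or.inr ⟨h1.symm, h2.symm⟩
  loopless := ⟨fun v h => h.1 rfl⟩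

/-- Markovian contagion scheduler. -/
def IsScheduler {W : Type*} [Fintype W] (D : (W × W) → (W × W) → ℝ) : Prop :=
  (∀ e e', 0 ≤ D e e') ∧ (∀ e, ∑ e', D e e' = 1) ∧ (∀ e, 0 < D e e) ∧
  (∀ e e', 0 < D e e' ↔ 0 < D e' e) ∧
  (∀ e e', Relation.ReflTransGen (fun a b => 0 < D a b) e e')

/-- One step transition probability of the chain `M_β`. -/
def kernel (G : SimpleGraph V) (r : ℝ) (εc : V → ℝ)
    (D : (V × V) → (V × V) → ℝ) (β : ℝ) :
    ((V → ℤ) × (V × V)) → ((V → ℤ) × (V × V)) → ℝ :=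
  fun s t =>
    let x := s.1; let x' := t.1; let e' := t.2
    let y := swap x e'.1 e'.2
    let a := util G r εc x e'.1 + util G r εc x e'.2
    let b := util G r εc y e'.1 + util G r εc y e'.2
    D s.2 e' *
      ((if x' = y then Real.exp (β * b) / (Real.exp (β * a) + Real.exp (β * b)) else 0)
       + (if x' = x then Real.exp (β * a) / (Real.exp (β * a) + Real.exp (β * b)) else 0))

/-- The finite set of all ±1 colorings of `V`. -/
def colorings (V : Type*) [Fintype V] [DecidableEq V] : Finset (V → ℤ) :=
  Fintype.piFinset fun _ => ({1, -1} : Finset ℤ)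

/-- The set `Ω_k` of states whose coloring has exactly `k` vertices colored `+1`. -/
def Omega (V : Type*) [Fintype V] [DecidableEq V] (k : ℕ) :
    Finset ((V → ℤ) × (V × V)) :=
  ((colorings V).filter fun x => plusCount x = k) ×ˢ (univ : Finset (V × V))

/-- `n`-step transition probabilities of a kernel restricted to a finite set `S` of states. -/
def kerpow {S : Type*} [DecidableEq S] (K : S → S → ℝ) (A : Finset S) : ℕ → S → S → ℝ
  | 0 => fun s t => if s = t then 1 else 0
  | n + 1 => fun s t => ∑ u ∈ A, kerpow K A n s u * K u t

/-- An admissible transition of the segregation chain. -/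
def Adm (D : (V × V) → (V × V) → ℝ)
    (s t : (V → ℤ) × (V × V)) : Prop :=
  0 < D s.2 t.2 ∧ (t.1 = s.1 ∨ t.1 = swap s.1 t.2.1 t.2.2)

/-- Resistance of a transition between states of the chain. -/
def tres (G : SimpleGraph V) (r : ℝ) (εc : V → ℝ)
    (s t : (V → ℤ) × (V × V)) : ℝ :=
  resist G r εc s.1 t.2 t.1

/-- `pathOK T a z l` : `l` is the list of successive vertices of a directed path
from `a` to `z` using transitions from `T`. -/
def pathOK {S : Type*} (T : Set (S × S)) (a z : S) : List S → Prop
  | [] => a = z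
  | b :: l => (a, b) ∈ T ∧ pathOK T b z l

/-- `T` is a tree (within the state set `A`) rooted at `z`. -/
def IsTreeRootedAt {S : Type*} (Adm : S → S → Prop) (A : Finset S)
    (T : Finset (S × S)) (z : S) : Prop :=
  (∀ p ∈ T, p.1 ∈ A ∧ p.2 ∈ A ∧ Adm p.1 p.2) ∧
  (∀ w ∈ A, w ≠ z → ∃! l : List S, pathOK (↑T : Set (S × S)) w z l)

/-- Resistance of a set of transitions. -/
def treeRes {S : Type*} (ρ : S → S → ℝ) (T : Finset (S × S)) : ℝ :=
  ∑ p ∈ T, ρ p.1 p.2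

end Schelling

theorem sum_sum_eq_two_nsmul_of_symm {ι M : Type*} [Fintype ι] [AddCommMonoid M]
    (S : Finset ι) (f : ι → ι → M) (hsymm : ∀ u v, f u v = f v u)
    (hS : ∀ u v, (u ∈ S ↔ v ∈ S) → f u v = 0) :
    ∑ u, ∑ v, f u v = 2 • ∑ u ∈ S, ∑ v, f u v := by
  have hout : ∀ u ∈ Sᶜ, ∑ v, f u v = ∑ v ∈ S, f v u := fun u hu => by
    rw [← sum_subset (subset_univ S) fun v _ hv => hS u v (by simp_all)]
    exact sum_congr rfl fun v _ => hsymm u v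
  have hin : ∀ v ∈ S, ∑ u ∈ Sᶜ, f v u = ∑ u, f v u := fun v hv =>
    sum_subset (subset_univ _) fun u _ hu => hS v u (by simp_all)
  calc ∑ u, ∑ v, f u v = ∑ u ∈ S, ∑ v, f u v + ∑ u ∈ Sᶜ, ∑ v, f u v :=
        (sum_add_sum_compl S _).symm
    _ = ∑ u ∈ S, ∑ v, f u v + ∑ v ∈ S, ∑ u ∈ Sᶜ, f v u := by
        rw [sum_congr rfl hout, sum_comm (s := Sᶜ)]
    _ = 2 • ∑ u ∈ S, ∑ v, f u v := by rw [sum_congr rfl hin, two_nsmul]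

namespace Schelling

variable {V : Type*}

def agreement (x : V → ℤ) (u v : V) : ℤ := if x u = x v then 1 else -1

theorem agreement_comm (x : V → ℤ) (u v : V) : agreement x u v = agreement x v u := by
  simp only [agreement, eq_comm]

theorem wdeg_eq_sum_agreement [Fintype V] (G : SimpleGraph V) (x : V → ℤ) (u : V) :
    wdeg G x u = ∑ v, if G.Adj u v then agreement x u v else 0 := by
  rw [wdeg, ← sum_filter]
  simp only [agreement, sum_ite, sum_const, filter_filter, eq_comm (a := x u)]
  simp [sub_eq_add_neg]

theorem sum_wdeg_sub_sum_wdeg_eq_two_mul [Fintype V] (G : SimpleGraph V) {x y : V → ℤ}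
    (S : Finset V)
    (hout : ∀ v ∉ S, y v = x v)
    (hin : ∀ u ∈ S, ∀ v ∈ S, agreement y u v = agreement x u v) :
    ∑ u, wdeg G y u - ∑ u, wdeg G x u = 2 * ∑ u ∈ S, (wdeg G y u - wdeg G x u) := by
  set f : V → V → ℤ := fun u v => if G.Adj u v then agreement y u v - agreement x u v else 0
  have hrow : ∀ u, wdeg G y u - wdeg G x u = ∑ v, f u v := fun u => by
    simp only [wdeg_eq_sum_agreement, f, ← sum_sub_distrib]
    exact sum_congr rfl fun v _ => by split_ifs <;> simp
  have hf : ∑ u, ∑ v, f u v = 2 • ∑ u ∈ S, ∑ v, f u v := by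
    refine sum_sum_eq_two_nsmul_of_symm S f (fun u v => ?_) fun u v huv => ?_
    · simp only [f, G.adj_comm u v, agreement_comm _ u v]
    · by_cases hu : u ∈ S
      · simp [f, hin u hu v (huv.1 hu)]
      · simp [f, agreement, hout u hu, hout v (mt huv.2 hu)]
  rw [← sum_sub_distrib, sum_congr rfl fun u _ => hrow u, hf, two_nsmul, two_mul,
    sum_congr rfl fun u _ => hrow u]

theorem potential_eq_mul_sum_wdeg_add_sum [Fintype V] (G : SimpleGraph V) (r : ℝ) (εc : V → ℝ)
    (x : V → ℤ) :
    potential G r εc x = r * ∑ u, (wdeg G x u : ℝ) + ∑ u, εc u := by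
  simp only [potential, util, sum_add_distrib, mul_sum]

section Swap

variable [DecidableEq V]

theorem swap_apply_of_ne (x : V → ℤ) {i j v : V} (hi : v ≠ i) (hj : v ≠ j) :
    swap x i j v = x v := by
  simp [swap, hi, hj]

theorem agreement_swap (x : V → ℤ) {i j : V} (hij : i ≠ j) :
    ∀ u ∈ ({i, j} : Finset V), ∀ v ∈ ({i, j} : Finset V),
      agreement (swap x i j) u v = agreement x u v := by
  simp only [mem_insert, mem_singleton]
  rintro u (rfl | rfl) v (rfl | rfl) <;> simp [agreement, swap, hij.symm, eq_comm]

theorem sum_wdeg_swap_sub_sum_wdeg [Fintype V] (G : SimpleGraph V) (x : V → ℤ) {i j : V}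
    (hij : i ≠ j) :
    ∑ u, wdeg G (swap x i j) u - ∑ u, wdeg G x u =
      2 * ((wdeg G (swap x i j) i + wdeg G (swap x i j) j) - (wdeg G x i + wdeg G x j)) := by
  have hout : ∀ v ∉ ({i, j} : Finset V), swap x i j v = x v := fun v hv => by
    simp only [mem_insert, mem_singleton, not_or] at hv
    exact swap_apply_of_ne x hv.1 hv.2
  rw [sum_wdeg_sub_sum_wdeg_eq_two_mul G {i, j} hout (agreement_swap x hij), sum_pair hij]
  ring

end Swap

theorem potential_diff_swap_general
    {V : Type*} [Fintype V] [DecidableEq V]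
    (G : SimpleGraph V) (r : ℝ) (εc : V → ℝ)
    (x : V → ℤ) (i j : V) (hij : i ≠ j) :
    potential G r εc (swap x i j) - potential G r εc x =
      2 * ((util G r εc (swap x i j) i + util G r εc (swap x i j) j)
            - (util G r εc x i + util G r εc x j)) := by
  have key : ∑ u, (wdeg G (swap x i j) u : ℝ) - ∑ u, (wdeg G x u : ℝ) =
      2 * ((wdeg G (swap x i j) i + wdeg G (swap x i j) j) - (wdeg G x i + wdeg G x j)) := by
    exact_mod_cast sum_wdeg_swap_sub_sum_wdeg G x hij
  simp only [potential_eq_mul_sum_wdeg_add_sum, util]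
  linear_combination r * key

/-- If `y` is obtained from `x` by exchanging the values `x_i` and `x_j`
(`i ≠ j`, adjacent or not), then `L(y) − L(x) = 2·[(u_i(y)+u_j(y)) − (u_i(x)+u_j(x))]` :
the change in potential under a swap is twice the change in the swapped agents' summed
utilities. -/
theorem potential_diff_swap
    {V : Type*} [Fintype V] [DecidableEq V]
    (G : SimpleGraph V) (r : ℝ) (hr : 0 < r) (εc : V → ℝ)
    (x : V → ℤ) (hx : IsColoring x) (i j : V) (hij : i ≠ j) :
    potential G r εc (swap x i j) - potential G r εc x =
      2 * ((util G r εc (swap x i j) i + util G r εc (swap x i j) j)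
            - (util G r εc x i + util G r εc x j)) :=
  potential_diff_swap_general G r εc x i j hij

end Schelling
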